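/- arXiv:2507.04779 — 7 statements merged into one kernel-verified Lean document; each statement's English description precedes it below -/
import Mathlib

section
/- Let 𝒩 be a nonempty finite set of vectors in [0,1]^k. Then there exists a constant ε > 0 such that for every pair (w, c) with w ∈ ℝ^k, ‖w‖₂ = 1 and c ∈ ℝ satisfying #{u ∈ 𝒩 : wᵀu − c > 0} < #𝒩, there is a measurable set ℰ(w,c) of unit vectors in ℝ^k whose surface measure on the unit sphere of ℝ^k is at least ε, such that for every w' ∈ ℰ(w,c) there exists v ∈ 𝒩 with {u ∈ 𝒩 : (w')ᵀu − (w')ᵀv > 0} = {u ∈ 𝒩 : wᵀu − c > 0}. -/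
/-!
Let `S` be the subset of `𝒩` cut off by `(w, c)`. Every `w'` in the open cone of directions along
which `S` lies strictly above `𝒩 \ S` cuts off `S` again with the threshold `⟪w', v⟫`, where `v` is
the `w'`-highest point of `𝒩 \ S` (nonempty since `S ≠ 𝒩`). The cone contains `w`, so it meets
the unit sphere in a relatively open cap whose orthogonal projection onto `w^⊥` contains a ball;
hence the cap has positive `(k - 1)`-dimensional Hausdorff measure. Only finitely many `S` occur,
so the least of these measures is a uniform `ε`.
-/

open MeasureTheory
open scoped RealInnerProductSpace Classical ENNReal

open Metric Module Submodule

section SphereCap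

variable {E : Type*} [NormedAddCommGroup E] [InnerProductSpace ℝ E]

theorem exists_mem_sphere_orthogonalProjectionOnto_eq {w : E} (hw : ‖w‖ = 1)
    (y : (ℝ ∙ w)ᗮ) (hy : ‖y‖ ≤ 1) :
    ∃ z ∈ sphere (0 : E) 1, (ℝ ∙ w)ᗮ.orthogonalProjectionOnto z = y ∧ dist z w ≤ 2 * ‖y‖ := by
  set t := √(1 - ‖y‖ ^ 2)
  have ht2 : t ^ 2 = 1 - ‖y‖ ^ 2 := Real.sq_sqrt (by nlinarith [norm_nonneg y])
  have ht0 : 0 ≤ t := Real.sqrt_nonneg _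
  have ht1 : t ≤ 1 := Real.sqrt_le_one.2 (by nlinarith [norm_nonneg y])
  refine ⟨y + t • w, ?_, ?_, ?_⟩
  · have hyw : ⟪(y : E), t • w⟫ = 0 := by
      rw [real_inner_smul_right, mem_orthogonal_singleton_iff_inner_left.1 y.2, mul_zero]
    have := norm_add_sq_eq_norm_sq_add_norm_sq_real hyw
    rw [norm_smul, hw, Real.norm_of_nonneg ht0, norm_coe] at this
    rw [mem_sphere_zero_iff_norm]
    nlinarith [norm_nonneg ((y : E) + t • w)]
  · have hw' : w ∈ (ℝ ∙ w)ᗮᗮ := le_orthogonal_orthogonal _ (mem_span_singleton_self w)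
    rw [map_add, map_smul, orthogonalProjectionOnto_mem_subspace_eq_self,
      orthogonalProjectionOnto_eq_zero_iff.2 hw', smul_zero, add_zero]
  · -- `1 - t ≤ 1 - t ^ 2 = ‖y‖ ^ 2 ≤ ‖y‖`
    calc dist ((y : E) + t • w) w = ‖(y : E) - (1 - t) • w‖ := by
          rw [dist_eq_norm]; congr 1; module
      _ ≤ ‖y‖ + (1 - t) := by
          refine (norm_sub_le _ _).trans_eq ?_
          rw [norm_smul, hw, mul_one, Real.norm_of_nonneg (by linarith), norm_coe]
      _ ≤ 2 * ‖y‖ := by nlinarith [norm_nonneg y]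

theorem hausdorffMeasure_sphere_inter_pos [FiniteDimensional ℝ E] [MeasurableSpace E]
    [BorelSpace E] {U : Set E} (hU : IsOpen U) {w : E} (hw : ‖w‖ = 1) (hwU : w ∈ U) :
    0 < μH[(finrank ℝ E : ℝ) - 1] (sphere (0 : E) 1 ∩ U) := by
  obtain ⟨r, hr, hrU⟩ := isOpen_iff.1 hU w hwU
  set K := (ℝ ∙ w)ᗮ
  have hw0 : w ≠ 0 := by rintro rfl; simp at hw
  have : Nontrivial E := ⟨⟨w, 0, hw0⟩⟩
  obtain ⟨n, hn⟩ : ∃ n, finrank ℝ E = n + 1 := Nat.exists_eq_add_one.2 finrank_pos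
  have : Fact (finrank ℝ E = n + 1) := ⟨hn⟩
  have hK : (finrank ℝ K : ℝ) = (finrank ℝ E : ℝ) - 1 := by
    rw [finrank_orthogonal_span_singleton (n := n) hw0, hn]; push_cast; ring
  have hball : ball (0 : K) (min r 1 / 2) ⊆ K.orthogonalProjectionOnto '' (sphere 0 1 ∩ U) := by
    intro y hy
    rw [mem_ball_zero_iff] at hy
    obtain ⟨z, hz, hzy, hzw⟩ :=
      exists_mem_sphere_orthogonalProjectionOnto_eq hw y (by linarith [min_le_right r 1])
    exact ⟨z, ⟨hz, hrU (by rw [mem_ball]; linarith [min_le_left r 1])⟩, hzy⟩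
  calc 0 < μH[finrank ℝ K] (ball (0 : K) (min r 1 / 2)) :=
        isOpen_ball.measure_pos _ (nonempty_ball.2 (by positivity))
    _ ≤ μH[(finrank ℝ E : ℝ) - 1] (K.orthogonalProjectionOnto '' (sphere 0 1 ∩ U)) := by
        rw [hK]; exact measure_mono hball
    _ ≤ μH[(finrank ℝ E : ℝ) - 1] (sphere 0 1 ∩ U) :=
        hausdorffMeasure_orthogonalProjectionOnto_le K _ _ (by rw [← hK]; positivity)

end SphereCap

section SeparatingCone

variable {E : Type*} [NormedAddCommGroup E] [InnerProductSpace ℝ E] [DecidableEq E]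

def separatingCone (N S : Finset E) : Set E :=
  {w | ∀ u ∈ S, ∀ v ∈ N \ S, ⟪w, v⟫ < ⟪w, u⟫}

theorem isOpen_separatingCone (N S : Finset E) : IsOpen (separatingCone N S) := by
  simp only [separatingCone, Set.ofPred_forall]
  exact isOpen_biInter_finset fun u _ ↦ isOpen_biInter_finset fun v _ ↦
    isOpen_lt (continuous_id.inner continuous_const) (continuous_id.inner continuous_const)

theorem mem_separatingCone_filter (N : Finset E) (w : E) (c : ℝ) :
    w ∈ separatingCone N (N.filter fun u ↦ 0 < ⟪w, u⟫ - c) := by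
  intro u hu v hv
  simp only [Finset.mem_sdiff, Finset.mem_filter, not_and, not_lt] at hu hv
  linarith [hv.2 hv.1]

theorem exists_filter_eq_of_mem_separatingCone {N S : Finset E} (hS : S ⊆ N)
    (hNS : (N \ S).Nonempty) {w : E} (hw : w ∈ separatingCone N S) :
    ∃ v ∈ N, (N.filter fun u ↦ 0 < ⟪w, u⟫ - ⟪w, v⟫) = S := by
  obtain ⟨v, hv, hvmax⟩ := Finset.exists_max_image (N \ S) (fun v ↦ ⟪w, v⟫) hNS
  refine ⟨v, (Finset.mem_sdiff.1 hv).1, Finset.ext fun u ↦ ?_⟩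
  rw [Finset.mem_filter, sub_pos]
  constructor
  · rintro ⟨huN, hvu⟩
    by_contra huS
    exact (hvmax u (Finset.mem_sdiff.2 ⟨huN, huS⟩)).not_gt hvu
  · intro huS
    exact ⟨hS huS, hw u huS v hv⟩

end SeparatingCone

theorem stmt0_general (k : ℕ) (N : Finset (EuclideanSpace ℝ (Fin k))) :
    ∃ ε : ℝ≥0∞, 0 < ε ∧
      ∀ (w : EuclideanSpace ℝ (Fin k)) (c : ℝ), ‖w‖ = 1 →
        (N.filter fun u => 0 < ⟪w, u⟫ - c).card < N.card →
        ∃ E : Set (EuclideanSpace ℝ (Fin k)),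
          E ⊆ Metric.sphere (0 : EuclideanSpace ℝ (Fin k)) 1 ∧
          MeasurableSet E ∧
          ε ≤ μH[(k : ℝ) - 1] E ∧
          ∀ w' ∈ E, ∃ v ∈ N,
            (N.filter fun u => 0 < ⟪w', u⟫ - ⟪w', v⟫) =
              N.filter fun u => 0 < ⟪w, u⟫ - c := by
  set cap := fun S ↦ sphere (0 : EuclideanSpace ℝ (Fin k)) 1 ∩ separatingCone N S
  obtain ⟨ε, hε, hεle⟩ : ∃ ε : ℝ≥0∞, 0 < ε ∧
      ∀ S ∈ N.powerset, (cap S).Nonempty → ε ≤ μH[(k : ℝ) - 1] (cap S) := by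
    refine ⟨(N.powerset.filter fun S ↦ (cap S).Nonempty).inf fun S ↦ μH[(k : ℝ) - 1] (cap S),
      (Finset.lt_inf_iff ENNReal.zero_lt_top).2 fun S hS ↦ ?_,
      fun S hS hne ↦ Finset.inf_le (Finset.mem_filter.2 ⟨hS, hne⟩)⟩
    obtain ⟨w, hw, hwS⟩ := (Finset.mem_filter.1 hS).2
    simpa using hausdorffMeasure_sphere_inter_pos (isOpen_separatingCone N S)
      (mem_sphere_zero_iff_norm.1 hw) hwS
  refine ⟨ε, hε, fun w c hw hcard ↦ ?_⟩
  have hSN := Finset.filter_subset (fun u ↦ 0 < ⟪w, u⟫ - c) N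
  have hwS : w ∈ cap _ := ⟨mem_sphere_zero_iff_norm.2 hw, mem_separatingCone_filter N w c⟩
  refine ⟨cap _, Set.inter_subset_left,
    isClosed_sphere.measurableSet.inter (isOpen_separatingCone N _).measurableSet,
    hεle _ (Finset.mem_powerset.2 hSN) ⟨w, hwS⟩, fun w' hw' ↦ ?_⟩
  exact exists_filter_eq_of_mem_separatingCone hSN
    (Finset.sdiff_nonempty.2 fun h ↦ (Finset.card_le_card h).not_gt hcard) hw'.2

/-- Let 𝒩 be a nonempty finite set of vectors in [0,1]^k. There exists ε > 0
such that for every unit vector w ∈ ℝ^k and every c ∈ ℝ with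
`#{u ∈ 𝒩 : wᵀu − c > 0} < #𝒩`, there is a measurable set ℰ(w,c) of unit vectors whose
surface measure (the (k−1)-dimensional Hausdorff measure on the unit sphere) is at least ε,
such that every w' ∈ ℰ(w,c) produces, for some v ∈ 𝒩, the same separation of 𝒩 via the
pair (w', w'ᵀv) as (w, c) does. -/
theorem stmt0 (k : ℕ) (N : Finset (EuclideanSpace ℝ (Fin k))) (hN : N.Nonempty)
    (hN01 : ∀ u ∈ N, ∀ i, u i ∈ Set.Icc (0 : ℝ) 1) :
    ∃ ε : ℝ≥0∞, 0 < ε ∧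
      ∀ (w : EuclideanSpace ℝ (Fin k)) (c : ℝ), ‖w‖ = 1 →
        (N.filter fun u => 0 < ⟪w, u⟫ - c).card < N.card →
        ∃ E : Set (EuclideanSpace ℝ (Fin k)),
          E ⊆ Metric.sphere (0 : EuclideanSpace ℝ (Fin k)) 1 ∧
          MeasurableSet E ∧
          ε ≤ μH[(k : ℝ) - 1] E ∧
          ∀ w' ∈ E, ∃ v ∈ N,
            (N.filter fun u => 0 < ⟪w', u⟫ - ⟪w', v⟫) =
              N.filter fun u => 0 < ⟪w, u⟫ - c :=
  stmt0_general k N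
end

section
/- Let 𝒩 be a finite set of vectors in [0,1]^k, let w ∈ ℝ^k with ‖w‖₂ = 1 and c ∈ ℝ, and let δ > 0 be defined by 2δ = min{1, min{wᵀu − c : u ∈ 𝒩, wᵀu − c > 0}}, where the inner minimum over the empty set is taken to be +∞ (so 2δ = 1 in that case). Then for every w' ∈ ℝ^k with ‖w'‖₂ = 1 and ‖w' − w‖₂ ≤ δ/(4√k), and every c' ∈ ℝ with |c' − (c + δ/2)| < δ/4, it holds that {u ∈ 𝒩 : (w')ᵀu − c' > 0} = {u ∈ 𝒩 : wᵀu − c > 0}. -/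
open MeasureTheory
open scoped RealInnerProductSpace Classical

/-- Let 𝒩 be a finite set of vectors in [0,1]^k, w a unit vector, c ∈ ℝ, and
δ defined by 2δ = min{1, min{wᵀu − c : u ∈ 𝒩, wᵀu − c > 0}} (inner min over the empty set
is +∞, encoded via `Finset.min` valued in `WithTop ℝ`). Then for every unit vector w' with
‖w' − w‖₂ ≤ δ/(4√k) and every c' with |c' − (c + δ/2)| < δ/4, the pair (w', c') separates
𝒩 exactly as (w, c) does. -/
theorem stmt1 (k : ℕ) (N : Finset (EuclideanSpace ℝ (Fin k)))
    (hN01 : ∀ u ∈ N, ∀ i, u i ∈ Set.Icc (0 : ℝ) 1)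
    (w : EuclideanSpace ℝ (Fin k)) (hw : ‖w‖ = 1) (c : ℝ) (δ : ℝ)
    (hδ : ((2 * δ : ℝ) : WithTop ℝ) =
      min (1 : WithTop ℝ)
        (((N.filter fun u => 0 < ⟪w, u⟫ - c).image fun u => ⟪w, u⟫ - c).min)) :
    ∀ w' : EuclideanSpace ℝ (Fin k), ‖w'‖ = 1 → ‖w' - w‖ ≤ δ / (4 * Real.sqrt k) →
      ∀ c' : ℝ, |c' - (c + δ / 2)| < δ / 4 →
        (N.filter fun u => 0 < ⟪w', u⟫ - c') = N.filter fun u => 0 < ⟪w, u⟫ - c := by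
  intro w' hw' hww' c' hc'
  have hk : 0 < k := by
    rcases Nat.eq_zero_or_pos k with hk | hk
    · exfalso
      subst hk
      have : ‖w‖ = 0 := by
        rw [EuclideanSpace.norm_eq]
        simp
      rw [hw] at this; norm_num at this
    · exact hk
  -- margin bound
  have hmargin : ∀ u ∈ N, 0 < ⟪w, u⟫ - c → 2 * δ ≤ ⟪w, u⟫ - c := by
    intro u hu hpos
    have hmem : (⟪w, u⟫ - c) ∈ ((N.filter fun u => 0 < ⟪w, u⟫ - c).image
        fun u => ⟪w, u⟫ - c) :=
      Finset.mem_image_of_mem _ (Finset.mem_filter.2 ⟨hu, hpos⟩)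
    have h1 := Finset.min_le hmem
    have h2 : ((2 * δ : ℝ) : WithTop ℝ) ≤ ((⟪w, u⟫ - c : ℝ) : WithTop ℝ) :=
      hδ ▸ le_trans (min_le_right _ _) h1
    exact_mod_cast h2
  have hδpos : 0 < δ := by
    have hpos : (0 : WithTop ℝ) < ((2 * δ : ℝ) : WithTop ℝ) := by
      rw [hδ]
      apply lt_min
      · exact_mod_cast (by norm_num : (0:ℝ) < 1)
      · rcases Finset.eq_empty_or_nonempty
            ((N.filter fun u => 0 < ⟪w, u⟫ - c).image fun u => ⟪w, u⟫ - c) with he | hne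
        · rw [he, Finset.min_empty]
          exact WithTop.coe_lt_top 0
        · obtain ⟨a, ha⟩ := Finset.min_of_nonempty hne
          rw [ha]
          have hm := Finset.mem_of_min ha
          rw [Finset.mem_image] at hm
          obtain ⟨u, hu, rfl⟩ := hm
          exact_mod_cast (Finset.mem_filter.1 hu).2
    have : (0 : ℝ) < 2 * δ := by exact_mod_cast hpos
    linarith
  have hsk : 0 < Real.sqrt k := Real.sqrt_pos.2 (by exact_mod_cast hk)
  -- c' bounds
  have hc1 : c + δ / 4 < c' := by
    have := abs_lt.1 hc'
    linarith [this.1]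
  have hc2 : c' < c + 3 * δ / 4 := by
    have := abs_lt.1 hc'
    linarith [this.2]
  -- inner product perturbation bound
  have hinner : ∀ u ∈ N, |⟪w', u⟫ - ⟪w, u⟫| ≤ δ / 4 := by
    intro u hu
    have hnu : ‖u‖ ≤ Real.sqrt k := by
      rw [EuclideanSpace.norm_eq]
      apply Real.sqrt_le_sqrt
      calc ∑ i, ‖u i‖ ^ 2 ≤ ∑ _i : Fin k, (1 : ℝ) := by
            apply Finset.sum_le_sum
            intro i _
            have h := hN01 u hu i
            rw [Real.norm_eq_abs, sq_abs]
            nlinarith [h.1, h.2]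
        _ = k := by simp
    have h1 : |⟪w' - w, u⟫| ≤ ‖w' - w‖ * ‖u‖ := abs_real_inner_le_norm _ _
    have h2 : ‖w' - w‖ * ‖u‖ ≤ (δ / (4 * Real.sqrt k)) * Real.sqrt k := by
      apply mul_le_mul hww' hnu (norm_nonneg _)
      positivity
    have h3 : (δ / (4 * Real.sqrt k)) * Real.sqrt k = δ / 4 := by
      field_simp
    rw [inner_sub_left] at h1
    linarith [h1, h2, h3.symm ▸ h2]
  -- conclusion
  ext u
  simp only [Finset.mem_filter]
  constructor
  · rintro ⟨hu, hpos'⟩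
    refine ⟨hu, ?_⟩
    by_contra h
    push_neg at h
    have hi := abs_le.1 (hinner u hu)
    linarith [hi.2]
  · rintro ⟨hu, hpos⟩
    refine ⟨hu, ?_⟩
    have hm := hmargin u hu hpos
    have hi := abs_le.1 (hinner u hu)
    linarith [hi.1]
end

section
/- Let 𝒩 be a nonempty finite set of vectors in ℝ^k, let w ∈ ℝ^k and c ∈ ℝ, and suppose #{u ∈ 𝒩 : wᵀu − c > 0} < #𝒩. Then there exists v ∈ 𝒩 such that {u ∈ 𝒩 : wᵀu − wᵀv > 0} = {u ∈ 𝒩 : wᵀu − c > 0}. -/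
open MeasureTheory
open scoped RealInnerProductSpace Classical

/-- For a nonempty finite set 𝒩 ⊆ ℝ^k, w ∈ ℝ^k and c ∈ ℝ with
`#{u ∈ 𝒩 : wᵀu − c > 0} < #𝒩`, there exists v ∈ 𝒩 such that
`{u ∈ 𝒩 : wᵀu − wᵀv > 0} = {u ∈ 𝒩 : wᵀu − c > 0}`. -/
theorem stmt2 (k : ℕ) (N : Finset (EuclideanSpace ℝ (Fin k))) (hN : N.Nonempty)
    (w : EuclideanSpace ℝ (Fin k)) (c : ℝ)
    (h : (N.filter fun u => 0 < ⟪w, u⟫ - c).card < N.card) :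
    ∃ v ∈ N, (N.filter fun u => 0 < ⟪w, u⟫ - ⟪w, v⟫) =
      N.filter fun u => 0 < ⟪w, u⟫ - c := by
  have hS : (N.filter fun u => ⟪w, u⟫ ≤ c).Nonempty := by
    by_contra hc
    rw [Finset.not_nonempty_iff_eq_empty, Finset.filter_eq_empty_iff] at hc
    have : (N.filter fun u => 0 < ⟪w, u⟫ - c) = N := by
      apply Finset.filter_true_of_mem
      intro x hx
      have := hc hx
      linarith [not_le.mp this]
    rw [this] at h
    exact lt_irrefl _ h
  obtain ⟨v, hvS, hvmax⟩ := (N.filter fun u => ⟪w, u⟫ ≤ c).exists_max_image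
    (fun u => ⟪w, u⟫) hS
  rw [Finset.mem_filter] at hvS
  refine ⟨v, hvS.1, ?_⟩
  ext u
  simp only [Finset.mem_filter]
  constructor
  · rintro ⟨hu, hgt⟩
    refine ⟨hu, ?_⟩
    by_contra hle
    push_neg at hle
    have hule : ⟪w, u⟫ ≤ c := by linarith
    have := hvmax u (Finset.mem_filter.mpr ⟨hu, hule⟩)
    linarith
  · rintro ⟨hu, hgt⟩
    exact ⟨hu, by linarith [hvS.2]⟩
end

section
/- Consider the weak greedy setup: H a real Hilbert space, 𝒢 a nonempty index set, and for each g ∈ 𝒢 orthonormal vectors e₀(g), e₁(g) ∈ H; for f ∈ H set P(g, f) = ⟨f, e₀(g)⟩² + ⟨f, e₁(g)⟩² and Π_g f = ⟨f, e₀(g)⟩ e₀(g) + ⟨f, e₁(g)⟩ e₁(g). Let t ∈ (0,1], γ ∈ (0,1], m ∈ H, m₀ = m, and for each s ≥ 1 let g_s ∈ 𝒢 satisfy P(g_s, m_{s−1}) ≥ t · sup_{g∈𝒢} P(g, m_{s−1}), with m_s = m_{s−1} − γ Π_{g_s} m_{s−1}. If m lies in the closed linear span of {e_l(g) : g ∈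 𝒢, l ∈ {0,1}}, then lim_{s→∞} ‖m_s‖ = 0; equivalently, the boosting approximants γ ∑_{s=1}^{M} Π_{g_s} m_{s−1} converge to m in H as M → ∞. -/
/-!
Each step lowers `‖x s‖²` by `γ (2 - γ) (r s)²`, where `r s` is the norm of the chosen projection
of the residual `x s`, so `r` is square-summable. Weak greediness bounds every projection of `x s`
by `r s / √t`, so `⟪x s, v⟫ → 0` for `v` in the span of the subspaces and, the residuals being
bounded, for `v` in its closure, in particular for `v = x 0`. Writing
`‖x n‖² = ⟪x n, x 0⟫ - ⟪x n, x 0 - x n⟫` and expanding `x 0 - x n = γ ∑_{s<n} Π_{g s} (x s)`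
bounds the last term by `(γ / √t) r n ∑_{s<n} r s`, which is small infinitely often for any
square-summable `r`. As `‖x n‖` is decreasing, it tends to `0`.
-/

open Filter Finset
open scoped RealInnerProductSpace

theorem frequently_mul_sum_range_lt_of_summable_sq {b : ℕ → ℝ}
    (hb : Summable fun n => b n ^ 2) {ε : ℝ} (hε : 0 < ε) :
    ∃ᶠ n in atTop, b n * ∑ j ∈ range n, b j < ε := by
  by_contra h
  rw [not_frequently] at h
  set B := ∑' n, b n ^ 2
  have hB : 0 ≤ B := tsum_nonneg fun n => sq_nonneg (b n)
  -- By Cauchy–Schwarz `(∑_{j<n} b j)² ≤ n B`, so `b n² ≥ ε² / (n B)`: a harmonic lower bound.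
  have harmonic : ∀ᶠ n : ℕ in atTop, ‖ε ^ 2 / (B + 1) * (1 / (n : ℝ))‖ ≤ b n ^ 2 := by
    filter_upwards [h, eventually_ge_atTop 1] with n hn hn1
    have hn0 : (0 : ℝ) < n := by exact_mod_cast hn1
    have hCS : (∑ j ∈ range n, b j) ^ 2 ≤ n * B := by
      refine sq_sum_le_card_mul_sum_sq.trans ?_
      rw [card_range]
      gcongr
      exact hb.sum_le_tsum _ fun i _ => sq_nonneg (b i)
    have hsq : ε ^ 2 ≤ b n ^ 2 * (n * (B + 1)) := calc
      ε ^ 2 ≤ (b n * ∑ j ∈ range n, b j) ^ 2 := by gcongr; exact not_lt.1 hn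
      _ = b n ^ 2 * (∑ j ∈ range n, b j) ^ 2 := mul_pow _ _ _
      _ ≤ b n ^ 2 * (n * (B + 1)) := by gcongr; nlinarith
    rw [Real.norm_of_nonneg (by positivity), div_mul_div_comm, mul_one,
      div_le_iff₀ (by positivity)]
    linarith
  have hpos : ε ^ 2 / (B + 1) ≠ 0 := by positivity
  exact Real.not_summable_one_div_natCast
    ((summable_mul_left_iff hpos).1 (hb.of_norm_bounded_eventually_nat harmonic))

theorem Antitone.tendsto_atTop_of_frequently_lt {α β : Type*} [Preorder α] [LinearOrder β]
    [TopologicalSpace β] [OrderTopology β] {f : α → β} {c : β} (hf : Antitone f)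
    (hc : ∀ a, c ≤ f a) (h : ∀ b > c, ∃ᶠ a in atTop, f a < b) : Tendsto f atTop (nhds c) := by
  refine tendsto_order.2 ⟨fun b hb => Eventually.of_forall fun a => hb.trans_le (hc a),
    fun b hb => ?_⟩
  obtain ⟨a, ha⟩ := (h b hb).exists
  filter_upwards [eventually_ge_atTop a] with n hn using (hf hn).trans_lt ha

namespace Submodule

variable {H : Type*} [NormedAddCommGroup H] [InnerProductSpace ℝ H] (K : Submodule ℝ H)
  [K.HasOrthogonalProjection]

theorem inner_starProjection_eq_inner_starProjection_starProjection (x y : H) :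
    ⟪x, K.starProjection y⟫ = ⟪K.starProjection x, K.starProjection y⟫ := by
  rw [inner_starProjection_left_eq_right,
    K.starProjection_eq_self_iff.2 (K.starProjection_apply_mem y)]

theorem abs_inner_starProjection_le (x y : H) :
    |⟪x, K.starProjection y⟫| ≤ ‖K.starProjection x‖ * ‖K.starProjection y‖ := by
  rw [inner_starProjection_eq_inner_starProjection_starProjection]
  exact abs_real_inner_le_norm _ _

theorem inner_starProjection_of_mem {v : H} (hv : v ∈ K) (x : H) :
    ⟪x, v⟫ = ⟪K.starProjection x, v⟫ := by
  rw [inner_starProjection_left_eq_right, K.starProjection_eq_self_iff.2 hv]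

theorem norm_sub_smul_starProjection_sq (γ : ℝ) (x : H) :
    ‖x - γ • K.starProjection x‖ ^ 2 = ‖x‖ ^ 2 - γ * (2 - γ) * ‖K.starProjection x‖ ^ 2 := by
  rw [norm_sub_sq_real, real_inner_smul_right,
    inner_starProjection_eq_inner_starProjection_starProjection, real_inner_self_eq_norm_sq,
    norm_smul, mul_pow, Real.norm_eq_abs, sq_abs]
  ring

end Submodule

theorem Orthonormal.starProjection_span_eq_sum {H ι : Type*} [NormedAddCommGroup H]
    [InnerProductSpace ℝ H] [Fintype ι] {v : ι → H} (hv : Orthonormal ℝ v)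
    [(Submodule.span ℝ (Set.range v)).HasOrthogonalProjection] (x : H) :
    (Submodule.span ℝ (Set.range v)).starProjection x = ∑ i, ⟪v i, x⟫ • v i := by
  refine Submodule.eq_starProjection_of_mem_of_inner_eq_zero
    (sum_mem fun i _ => Submodule.smul_mem _ _ (Submodule.subset_span ⟨i, rfl⟩)) fun w hw => ?_
  induction hw using Submodule.span_induction with
  | mem w hw =>
    obtain ⟨j, rfl⟩ := hw
    rw [inner_sub_left, hv.inner_left_fintype, real_inner_comm, conj_trivial, sub_self]
  | zero => exact inner_zero_right _
  | add w w' _ _ hw hw' => rw [inner_add_right, hw, hw', add_zero]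
  | smul c w _ hw => rw [real_inner_smul_right, hw, mul_zero]

theorem Orthonormal.norm_sum_smul_sq {H ι : Type*} [NormedAddCommGroup H]
    [InnerProductSpace ℝ H] [Fintype ι] {v : ι → H} (hv : Orthonormal ℝ v) (c : ι → ℝ) :
    ‖∑ i, c i • v i‖ ^ 2 = ∑ i, c i ^ 2 := by
  rw [← real_inner_self_eq_norm_sq, hv.inner_sum]
  simp only [conj_trivial, sq]

theorem tendsto_inner_zero_of_mem_topologicalClosure {H ι : Type*} [NormedAddCommGroup H]
    [InnerProductSpace ℝ H] {l : Filter ι} {x : ι → H} {C : ℝ} (hx : ∀ i, ‖x i‖ ≤ C)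
    {S : Submodule ℝ H} (hS : ∀ v ∈ S, Tendsto (fun i => ⟪x i, v⟫) l (nhds 0))
    {v : H} (hv : v ∈ S.topologicalClosure) : Tendsto (fun i => ⟪x i, v⟫) l (nhds 0) := by
  have hequi : Equicontinuous fun i => (innerSL ℝ (x i) : H → ℝ) := by
    refine ((NormedSpace.equicontinuous_TFAE fun i => innerSL ℝ (x i)).out 5 1).1 ?_
    exact ⟨C, fun i => (innerSL_apply_norm ℝ (x i)).trans_le (hx i)⟩
  have hclosed := hequi.isClosed_setOfPred_tendsto (l := l) (f := fun _ => (0 : ℝ))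
    continuous_const
  exact hclosed.closure_subset_iff.2 hS hv

section WeakGreedy

variable {H ι : Type*} [NormedAddCommGroup H] [InnerProductSpace ℝ H]

/-- The relaxed weak greedy algorithm; step `s` uses `g s`, the paper's `g_{s+1}`. -/
structure IsWeakGreedy (K : ι → Submodule ℝ H) [∀ i, (K i).HasOrthogonalProjection] (t γ : ℝ)
    (x : ℕ → H) (g : ℕ → ι) : Prop where
  weak_choice : ∀ s, t * ⨆ i, ‖(K i).starProjection (x s)‖ ^ 2 ≤
    ‖(K (g s)).starProjection (x s)‖ ^ 2
  step : ∀ s, x (s + 1) = x s - γ • (K (g s)).starProjection (x s)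

namespace IsWeakGreedy

variable {K : ι → Submodule ℝ H} [∀ i, (K i).HasOrthogonalProjection] {t γ : ℝ} {x : ℕ → H}
  {g : ℕ → ι}

theorem norm_sq_eq (h : IsWeakGreedy K t γ x g) (n : ℕ) :
    ‖x n‖ ^ 2 = ‖x 0‖ ^ 2 - γ * (2 - γ) * ∑ s ∈ range n, ‖(K (g s)).starProjection (x s)‖ ^ 2 := by
  induction n with
  | zero => simp
  | succ n ih =>
    rw [h.step, Submodule.norm_sub_smul_starProjection_sq, ih, sum_range_succ]
    ring

theorem antitone_norm (h : IsWeakGreedy K t γ x g) (hγ0 : 0 ≤ γ) (hγ2 : γ ≤ 2) :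
    Antitone fun s => ‖x s‖ := by
  refine antitone_nat_of_succ_le fun s => ?_
  rw [← sq_le_sq₀ (norm_nonneg _) (norm_nonneg _), h.step,
    Submodule.norm_sub_smul_starProjection_sq]
  have : 0 ≤ γ * (2 - γ) := mul_nonneg hγ0 (by linarith)
  nlinarith [sq_nonneg ‖(K (g s)).starProjection (x s)‖]

theorem summable_norm_starProjection_sq (h : IsWeakGreedy K t γ x g) (hγ0 : 0 < γ)
    (hγ2 : γ < 2) : Summable fun s => ‖(K (g s)).starProjection (x s)‖ ^ 2 := by
  have hc : 0 < γ * (2 - γ) := mul_pos hγ0 (by linarith)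
  refine summable_of_sum_range_le (c := ‖x 0‖ ^ 2 / (γ * (2 - γ))) (fun s => sq_nonneg _)
    fun n => ?_
  rw [le_div_iff₀ hc]
  nlinarith [h.norm_sq_eq n, sq_nonneg ‖x n‖]

theorem sqrt_mul_norm_starProjection_le (h : IsWeakGreedy K t γ x g) (ht : 0 ≤ t) (i : ι)
    (s : ℕ) : √t * ‖(K i).starProjection (x s)‖ ≤ ‖(K (g s)).starProjection (x s)‖ := by
  have hbdd : BddAbove (Set.range fun i => ‖(K i).starProjection (x s)‖ ^ 2) :=
    ⟨‖x s‖ ^ 2, by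
      rintro _ ⟨j, rfl⟩
      exact pow_le_pow_left₀ (norm_nonneg _) ((K j).norm_starProjection_apply_le _) 2⟩
  refine le_of_sq_le_sq ?_ (norm_nonneg _)
  rw [mul_pow, Real.sq_sqrt ht]
  exact (mul_le_mul_of_nonneg_left (le_ciSup hbdd i) ht).trans (h.weak_choice s)

theorem tendsto_starProjection_zero (h : IsWeakGreedy K t γ x g) (ht : 0 < t) (hγ0 : 0 < γ)
    (hγ2 : γ < 2) (i : ι) : Tendsto (fun s => (K i).starProjection (x s)) atTop (nhds 0) := by
  have hgain : Tendsto (fun s => ‖(K (g s)).starProjection (x s)‖) atTop (nhds 0) := by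
    simpa [Real.sqrt_sq (norm_nonneg _)] using
      (h.summable_norm_starProjection_sq hγ0 hγ2).tendsto_atTop_zero.sqrt
  refine squeeze_zero_norm (fun s => ?_) (by simpa using hgain.div_const √t)
  rw [le_div_iff₀' (Real.sqrt_pos.2 ht)]
  exact h.sqrt_mul_norm_starProjection_le ht.le i s

theorem tendsto_inner_zero_of_mem_iSup (h : IsWeakGreedy K t γ x g) (ht : 0 < t) (hγ0 : 0 < γ)
    (hγ2 : γ < 2) {v : H} (hv : v ∈ ⨆ i, K i) :
    Tendsto (fun s => ⟪x s, v⟫) atTop (nhds 0) := by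
  refine Submodule.iSup_induction K (motive := fun v => Tendsto (fun s => ⟪x s, v⟫) atTop (nhds 0))
    hv (fun i v hv => ?_) (by simp) fun v w hv hw => by simpa [inner_add_right] using hv.add hw
  refine Tendsto.congr (fun s => ((K i).inner_starProjection_of_mem hv (x s)).symm) ?_
  simpa using (h.tendsto_starProjection_zero ht hγ0 hγ2 i).inner tendsto_const_nhds

theorem sub_eq_smul_sum (h : IsWeakGreedy K t γ x g) (n : ℕ) :
    x 0 - x n = γ • ∑ s ∈ range n, (K (g s)).starProjection (x s) := by
  induction n with
  | zero => simp
  | succ n ih =>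
    rw [sum_range_succ, smul_add, ← ih, h.step]
    abel

theorem sqrt_mul_abs_inner_sub_le (h : IsWeakGreedy K t γ x g) (ht : 0 ≤ t) (hγ : 0 ≤ γ)
    (n : ℕ) : √t * |⟪x n, x 0 - x n⟫| ≤ γ * (‖(K (g n)).starProjection (x n)‖ *
      ∑ s ∈ range n, ‖(K (g s)).starProjection (x s)‖) := by
  rw [h.sub_eq_smul_sum, real_inner_smul_right, inner_sum, abs_mul, abs_of_nonneg hγ,
    mul_left_comm, mul_sum]
  gcongr
  refine (mul_le_mul_of_nonneg_left (abs_sum_le_sum_abs _ _) (Real.sqrt_nonneg t)).trans ?_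
  rw [mul_sum]
  refine sum_le_sum fun s _ => ?_
  calc √t * |⟪x n, (K (g s)).starProjection (x s)⟫|
      ≤ √t * ‖(K (g s)).starProjection (x n)‖ * ‖(K (g s)).starProjection (x s)‖ := by
        rw [mul_assoc]
        gcongr
        exact (K (g s)).abs_inner_starProjection_le _ _
    _ ≤ ‖(K (g n)).starProjection (x n)‖ * ‖(K (g s)).starProjection (x s)‖ := by
        gcongr
        exact h.sqrt_mul_norm_starProjection_le ht _ n

theorem frequently_norm_sq_lt (h : IsWeakGreedy K t γ x g) (ht : 0 < t) (hγ0 : 0 < γ)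
    (hγ2 : γ < 2) (hx0 : x 0 ∈ (⨆ i, K i).topologicalClosure) {ε : ℝ} (hε : 0 < ε) :
    ∃ᶠ n in atTop, ‖x n‖ ^ 2 < ε := by
  have hfar : Tendsto (fun n => |⟪x n, x 0⟫|) atTop (nhds 0) := by
    simpa using (tendsto_inner_zero_of_mem_topologicalClosure
      (fun n => h.antitone_norm hγ0.le hγ2.le (Nat.zero_le n))
      (fun v hv => h.tendsto_inner_zero_of_mem_iSup ht hγ0 hγ2 hv) hx0).abs
  have hnear := frequently_mul_sum_range_lt_of_summable_sq
    (h.summable_norm_starProjection_sq hγ0 hγ2) (ε := √t * ε / (2 * γ)) (by positivity)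
  refine (hnear.and_eventually (hfar.eventually (gt_mem_nhds (half_pos hε)))).mono
    fun n ⟨hn, hfar_n⟩ => ?_
  have hcross : √t * |⟪x n, x 0 - x n⟫| < √t * (ε / 2) := calc
    _ ≤ _ := h.sqrt_mul_abs_inner_sub_le ht.le hγ0.le n
    _ < γ * (√t * ε / (2 * γ)) := mul_lt_mul_of_pos_left hn hγ0
    _ = √t * (ε / 2) := by field_simp
  have hnear_n := lt_of_mul_lt_mul_left hcross (Real.sqrt_nonneg t)
  have hsplit : ‖x n‖ ^ 2 = ⟪x n, x 0⟫ - ⟪x n, x 0 - x n⟫ := by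
    rw [inner_sub_right, real_inner_self_eq_norm_sq]
    ring
  linarith [le_abs_self ⟪x n, x 0⟫, neg_abs_le ⟪x n, x 0 - x n⟫]

theorem tendsto_zero (h : IsWeakGreedy K t γ x g) (ht : 0 < t) (hγ0 : 0 < γ) (hγ2 : γ < 2)
    (hx0 : x 0 ∈ (⨆ i, K i).topologicalClosure) : Tendsto x atTop (nhds 0) := by
  rw [tendsto_zero_iff_norm_tendsto_zero]
  refine (h.antitone_norm hγ0.le hγ2.le).tendsto_atTop_of_frequently_lt
    (fun n => norm_nonneg _) fun ε hε => ?_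
  exact (h.frequently_norm_sq_lt ht hγ0 hγ2 hx0 (pow_pos hε 2)).mono
    fun n hn => lt_of_pow_lt_pow_left₀ 2 hε.le hn

end IsWeakGreedy

end WeakGreedy

theorem stmt10_general {H : Type*} [NormedAddCommGroup H] [InnerProductSpace ℝ H]
    {G : Type*} (e : G → Fin 2 → H)
    (he_norm : ∀ g l, ‖e g l‖ = 1) (he_orth : ∀ g, ⟪e g 0, e g 1⟫ = 0)
    (P : G → H → ℝ) (hP : ∀ g f, P g f = ⟪f, e g 0⟫ ^ 2 + ⟪f, e g 1⟫ ^ 2)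
    (Pi : G → H → H) (hPi : ∀ g f, Pi g f = ⟪f, e g 0⟫ • e g 0 + ⟪f, e g 1⟫ • e g 1)
    (t γ : ℝ) (ht0 : 0 < t) (hγ0 : 0 < γ) (hγ1 : γ ≤ 1)
    (m : H) (mseq : ℕ → H) (gs : ℕ → G)
    (hm0 : mseq 0 = m)
    (hgs : ∀ s : ℕ, t * ⨆ g, P g (mseq s) ≤ P (gs (s + 1)) (mseq s))
    (hrec : ∀ s : ℕ, mseq (s + 1) = mseq s - γ • Pi (gs (s + 1)) (mseq s))
    (hspan : m ∈
      (Submodule.span ℝ (Set.range fun p : G × Fin 2 => e p.1 p.2)).topologicalClosure) :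
    Tendsto (fun s => ‖mseq s‖) atTop (nhds 0) ∧
      Tendsto (fun M : ℕ => γ • ∑ s ∈ Finset.Icc 1 M, Pi (gs s) (mseq (s - 1)))
        atTop (nhds m) := by
  set K : G → Submodule ℝ H := fun g => Submodule.span ℝ (Set.range (e g))
  have : ∀ g, (K g).HasOrthogonalProjection := fun g => by
    have := FiniteDimensional.span_of_finite ℝ (Set.finite_range (e g))
    infer_instance
  have he : ∀ g, Orthonormal ℝ (e g) := fun g => by
    refine orthonormal_iff_ite.2 fun i j => ?_
    fin_cases i <;> fin_cases j <;>
      simp [he_norm, he_orth, real_inner_comm (e g 0)]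
  have hPi_eq : ∀ g f, Pi g f = (K g).starProjection f := fun g f => by
    rw [(he g).starProjection_span_eq_sum, Fin.sum_univ_two, hPi, real_inner_comm f,
      real_inner_comm f]
  have hP_eq : ∀ g f, P g f = ‖(K g).starProjection f‖ ^ 2 := fun g f => by
    rw [← hPi_eq, hPi, hP, ← Fin.sum_univ_two (fun l => ⟪f, e g l⟫ • e g l),
      (he g).norm_sum_smul_sq, Fin.sum_univ_two]
  have hgreedy : IsWeakGreedy K t γ mseq (fun s => gs (s + 1)) :=
    ⟨fun s => by simpa only [hP_eq] using hgs s, fun s => by rw [hrec, hPi_eq]⟩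
  have hspan_le : Submodule.span ℝ (Set.range fun p : G × Fin 2 => e p.1 p.2) ≤ ⨆ g, K g :=
    Submodule.span_le.2 <| Set.range_subset_iff.2 fun p =>
      Submodule.mem_iSup_of_mem p.1 (Submodule.subset_span ⟨p.2, rfl⟩)
  have hlim := hgreedy.tendsto_zero ht0 hγ0 (by linarith)
    (hm0 ▸ Submodule.topologicalClosure_mono hspan_le hspan)
  have hpartial : ∀ M, γ • ∑ s ∈ Finset.Icc 1 M, Pi (gs s) (mseq (s - 1)) = m - mseq M := by
    intro M
    rw [← hm0, hgreedy.sub_eq_smul_sum, ← Ico_add_one_right_eq_Icc,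
      sum_Ico_eq_sum_range]
    simp only [hPi_eq, add_comm 1, Nat.add_sub_cancel]
  refine ⟨tendsto_zero_iff_norm_tendsto_zero.1 hlim, ?_⟩
  simpa [hpartial] using tendsto_const_nhds.sub hlim

/-- Weak greedy setup: H a real Hilbert space, 𝒢 a nonempty index set, for
each g orthonormal vectors e₀(g), e₁(g); P(g,f) = ⟨f,e₀(g)⟩² + ⟨f,e₁(g)⟩² and
Π_g f = ⟨f,e₀(g)⟩e₀(g) + ⟨f,e₁(g)⟩e₁(g). With t ∈ (0,1], γ ∈ (0,1], m₀ = m,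
P(g_s, m_{s−1}) ≥ t·sup_g P(g, m_{s−1}) and m_s = m_{s−1} − γ Π_{g_s} m_{s−1}: if m lies in
the closed linear span of the e_l(g), then ‖m_s‖ → 0, equivalently the boosting
approximants γ ∑_{s=1}^{M} Π_{g_s} m_{s−1} converge to m. -/
theorem stmt10 {H : Type*} [NormedAddCommGroup H] [InnerProductSpace ℝ H] [CompleteSpace H]
    {G : Type*} [Nonempty G] (e : G → Fin 2 → H)
    (he_norm : ∀ g l, ‖e g l‖ = 1) (he_orth : ∀ g, ⟪e g 0, e g 1⟫ = 0)
    (P : G → H → ℝ) (hP : ∀ g f, P g f = ⟪f, e g 0⟫ ^ 2 + ⟪f, e g 1⟫ ^ 2)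
    (Pi : G → H → H) (hPi : ∀ g f, Pi g f = ⟪f, e g 0⟫ • e g 0 + ⟪f, e g 1⟫ • e g 1)
    (t γ : ℝ) (ht0 : 0 < t) (ht1 : t ≤ 1) (hγ0 : 0 < γ) (hγ1 : γ ≤ 1)
    (m : H) (mseq : ℕ → H) (gs : ℕ → G)
    (hm0 : mseq 0 = m)
    (hgs : ∀ s : ℕ, t * ⨆ g, P g (mseq s) ≤ P (gs (s + 1)) (mseq s))
    (hrec : ∀ s : ℕ, mseq (s + 1) = mseq s - γ • Pi (gs (s + 1)) (mseq s))
    (hspan : m ∈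
      (Submodule.span ℝ (Set.range fun p : G × Fin 2 => e p.1 p.2)).topologicalClosure) :
    Tendsto (fun s => ‖mseq s‖) atTop (nhds 0) ∧
      Tendsto (fun M : ℕ => γ • ∑ s ∈ Finset.Icc 1 M, Pi (gs s) (mseq (s - 1)))
        atTop (nhds m) :=
  stmt10_general e he_norm he_orth P hP Pi hPi t γ ht0 hγ0 hγ1 m mseq gs hm0 hgs hrec hspan
end

section
/- Consider the weak greedy setup: H a real Hilbert space, 𝒢 a nonempty index set, and for each g ∈ 𝒢 orthonormal vectors e₀(g), e₁(g) ∈ H; for f ∈ H set P(g, f) = ⟨f, e₀(g)⟩² + ⟨f, e₁(g)⟩² and Π_g f = ⟨f, e₀(g)⟩ e₀(g) + ⟨f, e₁(g)⟩ e₁(g). Let t ∈ (0,1], γ ∈ (0,1], m ∈ H, m₀ = m, and for each s ≥ 1 let g_s ∈ 𝒢 satisfy P(g_s, m_{s−1}) ≥ t · sup_{g∈𝒢} P(g, m_{s−1}), with m_s = m_{s−1} − γ Π_{g_s} m_{s−1}. Then for all integers s > q ≥ 0, |⟨m_q − m_s, m_s⟩| ≤ γ √(P(g_{s+1}, m_s)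 / t) · ∑_{i=q+1}^{s} √(2 P(g_i, m_{i−1})). -/
set_option maxHeartbeats 1000000


open scoped RealInnerProductSpace

lemma cs2 (a0 a1 b0 b1 : ℝ) :
    |a0 * b0 + a1 * b1| ≤ Real.sqrt (a0 ^ 2 + a1 ^ 2) * Real.sqrt (b0 ^ 2 + b1 ^ 2) := by
  rw [← Real.sqrt_mul (by positivity), ← Real.sqrt_sq_eq_abs]
  apply Real.sqrt_le_sqrt
  nlinarith [sq_nonneg (a0 * b1 - a1 * b0)]

/-- Weak greedy setup as in STATEMENT 10. Then for all integers s > q ≥ 0,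
|⟨m_q − m_s, m_s⟩| ≤ γ √(P(g_{s+1}, m_s)/t) · ∑_{i=q+1}^{s} √(2 P(g_i, m_{i−1})). -/
theorem stmt11 {H : Type*} [NormedAddCommGroup H] [InnerProductSpace ℝ H]
    {G : Type*} [Nonempty G] (e : G → Fin 2 → H)
    (he_norm : ∀ g l, ‖e g l‖ = 1) (he_orth : ∀ g, ⟪e g 0, e g 1⟫ = 0)
    (P : G → H → ℝ) (hP : ∀ g f, P g f = ⟪f, e g 0⟫ ^ 2 + ⟪f, e g 1⟫ ^ 2)
    (Pi : G → H → H) (hPi : ∀ g f, Pi g f = ⟪f, e g 0⟫ • e g 0 + ⟪f, e g 1⟫ • e g 1)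
    (t γ : ℝ) (ht0 : 0 < t) (ht1 : t ≤ 1) (hγ0 : 0 < γ) (hγ1 : γ ≤ 1)
    (m : H) (mseq : ℕ → H) (gs : ℕ → G)
    (hm0 : mseq 0 = m)
    (hgs : ∀ s : ℕ, t * ⨆ g, P g (mseq s) ≤ P (gs (s + 1)) (mseq s))
    (hrec : ∀ s : ℕ, mseq (s + 1) = mseq s - γ • Pi (gs (s + 1)) (mseq s)) :
    ∀ q s : ℕ, q < s →
      |⟪mseq q - mseq s, mseq s⟫| ≤
        γ * Real.sqrt (P (gs (s + 1)) (mseq s) / t) *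
          ∑ i ∈ Finset.Icc (q + 1) s, Real.sqrt (2 * P (gs i) (mseq (i - 1))) := by
  -- orthonormality
  have horth : ∀ g : G, Orthonormal ℝ (e g) := by
    intro g
    rw [orthonormal_iff_ite]
    intro i j
    fin_cases i <;> fin_cases j <;>
      simp [real_inner_self_eq_norm_sq, he_norm, he_orth, real_inner_comm (e g 1) (e g 0)] <;>
      rw [real_inner_comm] <;> simp [he_orth]
  -- Bessel
  have hbessel : ∀ (g : G) (f : H), P g f ≤ ‖f‖ ^ 2 := by
    intro g f
    have := (horth g).sum_inner_products_le (s := Finset.univ) f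
    rw [Fin.sum_univ_two] at this
    simpa [hP, real_inner_comm f, sq_abs] using this
  -- telescoping
  have htel : ∀ q s : ℕ, q ≤ s →
      mseq q - mseq s = ∑ i ∈ Finset.Icc (q + 1) s, γ • Pi (gs i) (mseq (i - 1)) := by
    intro q s hqs
    induction s, hqs using Nat.le_induction with
    | base => simp
    | succ n hn ih =>
      rw [Finset.sum_Icc_succ_top (by omega), ← ih, hrec n]
      abel_nf
  intro q s hqs
  set C := Real.sqrt (P (gs (s + 1)) (mseq s) / t) with hC
  -- per-term bound
  have hterm : ∀ i : ℕ, |⟪Pi (gs i) (mseq (i - 1)), mseq s⟫| ≤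
      Real.sqrt (2 * P (gs i) (mseq (i - 1))) * C := by
    intro i
    set g := gs i
    set f := mseq (i - 1)
    have hexp : ⟪Pi g f, mseq s⟫ =
        ⟪f, e g 0⟫ * ⟪e g 0, mseq s⟫ + ⟪f, e g 1⟫ * ⟪e g 1, mseq s⟫ := by
      rw [hPi]
      simp [inner_add_left, real_inner_smul_left]
    rw [hexp]
    have h1 := cs2 ⟪f, e g 0⟫ ⟪f, e g 1⟫ ⟪e g 0, mseq s⟫ ⟪e g 1, mseq s⟫
    have h2 : Real.sqrt (⟪f, e g 0⟫ ^ 2 + ⟪f, e g 1⟫ ^ 2) ≤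
        Real.sqrt (2 * P g f) := by
      apply Real.sqrt_le_sqrt
      rw [hP]
      nlinarith [sq_nonneg ⟪f, e g 0⟫, sq_nonneg ⟪f, e g 1⟫]
    have h3 : Real.sqrt (⟪e g 0, mseq s⟫ ^ 2 + ⟪e g 1, mseq s⟫ ^ 2) ≤ C := by
      apply Real.sqrt_le_sqrt
      have hPle : P g (mseq s) ≤ ⨆ g', P g' (mseq s) := by
        apply le_ciSup (f := fun g' => P g' (mseq s))
        exact ⟨‖mseq s‖ ^ 2, fun x ⟨g', hg'⟩ => hg' ▸ hbessel g' (mseq s)⟩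
      have := (hgs s)
      have hsup : ⨆ g', P g' (mseq s) ≤ P (gs (s + 1)) (mseq s) / t := by
        rw [le_div_iff₀ ht0]; linarith [this]
      calc ⟪e g 0, mseq s⟫ ^ 2 + ⟪e g 1, mseq s⟫ ^ 2 = P g (mseq s) := by
            rw [hP, real_inner_comm (mseq s), real_inner_comm (mseq s)]
        _ ≤ P (gs (s + 1)) (mseq s) / t := hPle.trans hsup
    calc |⟪f, e g 0⟫ * ⟪e g 0, mseq s⟫ + ⟪f, e g 1⟫ * ⟪e g 1, mseq s⟫|
        ≤ Real.sqrt (⟪f, e g 0⟫ ^ 2 + ⟪f, e g 1⟫ ^ 2) *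
          Real.sqrt (⟪e g 0, mseq s⟫ ^ 2 + ⟪e g 1, mseq s⟫ ^ 2) := h1
      _ ≤ Real.sqrt (2 * P g f) * C :=
          mul_le_mul h2 h3 (Real.sqrt_nonneg _) (Real.sqrt_nonneg _)
  rw [htel q s hqs.le]
  rw [sum_inner]
  calc |∑ i ∈ Finset.Icc (q + 1) s, ⟪γ • Pi (gs i) (mseq (i - 1)), mseq s⟫|
      ≤ ∑ i ∈ Finset.Icc (q + 1) s, |⟪γ • Pi (gs i) (mseq (i - 1)), mseq s⟫| :=
        Finset.abs_sum_le_sum_abs _ _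
    _ ≤ ∑ i ∈ Finset.Icc (q + 1) s, γ * (Real.sqrt (2 * P (gs i) (mseq (i - 1))) * C) := by
        apply Finset.sum_le_sum
        intro i _
        rw [real_inner_smul_left, abs_mul, abs_of_pos hγ0]
        exact mul_le_mul_of_nonneg_left (hterm i) hγ0.le
    _ = γ * C * ∑ i ∈ Finset.Icc (q + 1) s, Real.sqrt (2 * P (gs i) (mseq (i - 1))) := by
        rw [Finset.mul_sum]; congr 1; ext i; ring
end

section
/- Consider the weak greedy setup: H a real Hilbert space, 𝒢 a nonempty index set, and for each g ∈ 𝒢 orthonormal vectors e₀(g), e₁(g) ∈ H; for f ∈ H set P(g, f) = ⟨f, e₀(g)⟩² + ⟨f, e₁(g)⟩² and Π_g f = ⟨f, e₀(g)⟩ e₀(g) + ⟨f, e₁(g)⟩ e₁(g). Let t ∈ (0,1], γ ∈ (0,1], m ∈ H, m₀ = m, and for each s ≥ 1 let g_s ∈ 𝒢 satisfy P(g_s, m_{s−1}) ≥ t · sup_{g∈𝒢} P(g, m_{s−1}), with m_s = m_{s−1} − γ Π_{g_s} m_{s−1}. If δ > 0 and N₀ ≥ 0 are such that sup_{g∈𝒢}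 P(g, m_q) ≥ δ² for every q > N₀, then for all integers s > q > N₀, ‖m_s‖² ≤ ‖m_q‖² − γ(2 − γ) t δ² (s − q). -/
open scoped RealInnerProductSpace

/-- Weak greedy setup as in STATEMENT 10. If δ > 0 and N₀ ≥ 0 are such that
sup_g P(g, m_q) ≥ δ² for every q > N₀, then for all integers s > q > N₀,
‖m_s‖² ≤ ‖m_q‖² − γ(2 − γ) t δ² (s − q). -/
theorem stmt13 {H : Type*} [NormedAddCommGroup H] [InnerProductSpace ℝ H]
    {G : Type*} [Nonempty G] (e : G → Fin 2 → H)
    (he_norm : ∀ g l, ‖e g l‖ = 1) (he_orth : ∀ g, ⟪e g 0, e g 1⟫ = 0)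
    (P : G → H → ℝ) (hP : ∀ g f, P g f = ⟪f, e g 0⟫ ^ 2 + ⟪f, e g 1⟫ ^ 2)
    (Pi : G → H → H) (hPi : ∀ g f, Pi g f = ⟪f, e g 0⟫ • e g 0 + ⟪f, e g 1⟫ • e g 1)
    (t γ : ℝ) (ht0 : 0 < t) (ht1 : t ≤ 1) (hγ0 : 0 < γ) (hγ1 : γ ≤ 1)
    (m : H) (mseq : ℕ → H) (gs : ℕ → G)
    (hm0 : mseq 0 = m)
    (hgs : ∀ s : ℕ, t * ⨆ g, P g (mseq s) ≤ P (gs (s + 1)) (mseq s))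
    (hrec : ∀ s : ℕ, mseq (s + 1) = mseq s - γ • Pi (gs (s + 1)) (mseq s))
    (δ : ℝ) (hδ : 0 < δ) (N₀ : ℕ)
    (hsup : ∀ q : ℕ, N₀ < q → δ ^ 2 ≤ ⨆ g, P g (mseq q)) :
    ∀ q s : ℕ, N₀ < q → q < s →
      ‖mseq s‖ ^ 2 ≤ ‖mseq q‖ ^ 2 - γ * (2 - γ) * t * δ ^ 2 * ((s : ℝ) - q) := by
  -- key identity for one step
  have key : ∀ s : ℕ, ‖mseq (s + 1)‖ ^ 2
      = ‖mseq s‖ ^ 2 - γ * (2 - γ) * P (gs (s + 1)) (mseq s) := by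
    intro s
    set f := mseq s
    set g := gs (s + 1)
    set a := ⟪f, e g 0⟫ with ha
    set b := ⟪f, e g 1⟫ with hb
    have hrw : mseq (s + 1) = f - γ • (a • e g 0 + b • e g 1) := by
      rw [hrec s, hPi]
    have hinner : ⟪f, γ • (a • e g 0 + b • e g 1)⟫ = γ * (a ^ 2 + b ^ 2) := by
      rw [inner_smul_right, inner_add_right, inner_smul_right, inner_smul_right,
        ← ha, ← hb]
      ring
    have hnorm : ‖γ • (a • e g 0 + b • e g 1)‖ ^ 2 = γ ^ 2 * (a ^ 2 + b ^ 2) := by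
      have h1 : ‖a • e g 0 + b • e g 1‖ ^ 2 = a ^ 2 + b ^ 2 := by
        rw [norm_add_sq_real, inner_smul_left, inner_smul_right,
          norm_smul, norm_smul, he_orth g, he_norm g 0, he_norm g 1]
        simp [RCLike.conj_to_real, abs_sq]
      rw [norm_smul]
      rw [mul_pow, h1]
      simp [sq_abs]
    rw [hrw, norm_sub_sq_real, hinner, hnorm, hP]
    rw [← ha, ← hb]
    ring
  have hstep : ∀ s : ℕ, N₀ < s →
      ‖mseq (s + 1)‖ ^ 2 ≤ ‖mseq s‖ ^ 2 - γ * (2 - γ) * t * δ ^ 2 := by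
    intro s hs
    have h1 : t * δ ^ 2 ≤ P (gs (s + 1)) (mseq s) := by
      calc t * δ ^ 2 ≤ t * ⨆ g, P g (mseq s) :=
            mul_le_mul_of_nonneg_left (hsup s (by omega)) ht0.le
        _ ≤ _ := hgs s
    have hγγ : 0 ≤ γ * (2 - γ) := by nlinarith
    have := key s
    nlinarith
  intro q s hq hqs
  induction s with
  | zero => omega
  | succ n ih =>
    rcases Nat.lt_or_ge q n with h | h
    · have hn := ih h
      have := hstep n (by omega)
      push_cast
      push_cast at hn
      nlinarith
    · have hqn : q = n := by omega
      subst hqn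
      have := hstep q (by omega)
      push_cast
      nlinarith
end

section
/- Let k ≥ 1 and p ≥ 1 be integers, let i₁ < ⋯ < i_k be indices in {1, …, p}, and let a_q < b_q be real numbers for q ∈ {1, …, k}. Then there exists a 01Neuro network of depth L = 2 + ⌈log₂ k⌉ on ℝ^p with sparsity w₀ = 2 (for suitable widths p₁, …, p_{L−1} and p_L = 1) whose output satisfies f_{L,1}(x) = ∏_{q=1}^{k} 1{a_q < x_{i_q} ≤ b_q} for every x ∈ ℝ^p. -/
/-!
Layer 1 compares `x (idx q)` with `a q` (neuron `2q - 1`) and with `b q` (neuron `2q`). As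
`a q < x (idx q) ≤ b q` holds iff the first comparison fires and the second does not, a layer-2
neuron with weights `(1, -1)/√2` and bias `1/(2√2)` turns each pair into the slab indicator.
The remaining `⌈log₂ k⌉` layers form a balanced binary AND-tree: weights `(1, 1)/√2` with bias
`3/(2√2)` fire iff both inputs do, and an unpaired last neuron is copied (weight `1`, bias
`1/2`). So neuron `h` of layer `t + 2` is the AND over the leaves `q` with `⌈q / 2^t⌉ = h`,
and at `t = ⌈log₂ k⌉` there is a single block containing every leaf.
-/

open Finset

noncomputable section

namespace ZeroOneNeuroBox

def basisVec (i : ℕ) (c : ℝ) (m : ℕ) : ℝ := if m = i then c else 0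

def pairVec (i j : ℕ) (c d : ℝ) (m : ℕ) : ℝ := basisVec i c m + basisVec j d m

def UnitTwoSparseOn (s : Finset ℕ) (w : ℕ → ℝ) : Prop :=
  ∑ m ∈ s, w m ^ 2 = 1 ∧ #{m ∈ s | w m ≠ 0} ≤ 2

section SparseVectors

variable {s : Finset ℕ} {i j : ℕ} {c d : ℝ}

lemma sum_basisVec_mul (hi : i ∈ s) (y : ℕ → ℝ) :
    ∑ m ∈ s, basisVec i c m * y m = c * y i := by
  simp [basisVec, ite_mul, hi]

lemma sum_pairVec_mul (hi : i ∈ s) (hj : j ∈ s) (y : ℕ → ℝ) :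
    ∑ m ∈ s, pairVec i j c d m * y m = c * y i + d * y j := by
  simp only [pairVec, add_mul, sum_add_distrib, sum_basisVec_mul hi, sum_basisVec_mul hj]

lemma card_filter_ne_zero_le_two {w : ℕ → ℝ} (hw : ∀ m, w m ≠ 0 → m = i ∨ m = j) :
    #{m ∈ s | w m ≠ 0} ≤ 2 :=
  (card_le_card fun m hm => by simpa using hw m (mem_filter.1 hm).2).trans card_le_two

lemma unitTwoSparseOn_basisVec (hi : i ∈ s) : UnitTwoSparseOn s (basisVec i 1) := by
  refine ⟨?_, card_filter_ne_zero_le_two (i := i) (j := i) fun m hm => ?_⟩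
  · simp_rw [sq]
    rw [sum_basisVec_mul hi]
    simp [basisVec]
  · by_contra; simp_all [basisVec]

lemma unitTwoSparseOn_pairVec (hi : i ∈ s) (hj : j ∈ s) (hij : i ≠ j)
    (hcd : c ^ 2 + d ^ 2 = 1) : UnitTwoSparseOn s (pairVec i j c d) := by
  refine ⟨?_, card_filter_ne_zero_le_two (i := i) (j := j) fun m hm => ?_⟩
  · simp_rw [sq] at hcd ⊢
    rw [sum_pairVec_mul hi hj]
    simpa [pairVec, basisVec, hij, hij.symm] using hcd
  · by_contra; simp_all [pairVec, basisVec]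

end SparseVectors

section Gates

variable (A B : Prop) [Decidable A] [Decidable B]

lemma threshold_andNot {s : ℝ} (hs : 0 < s) :
    (if s / 2 < s * (if A then 1 else 0) + -s * (if B then 1 else 0) then (1 : ℝ) else 0) =
      if A ∧ ¬B then 1 else 0 := by
  by_cases A <;> by_cases B <;> simp [*] <;> linarith

lemma threshold_and {s : ℝ} (hs : 0 < s) :
    (if 3 / 2 * s < s * (if A then 1 else 0) + s * (if B then 1 else 0) then (1 : ℝ) else 0) =
      if A ∧ B then 1 else 0 := by
  by_cases A <;> by_cases B <;> simp [*] <;> linarith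

lemma threshold_id : (if (1 / 2 : ℝ) < 1 * (if A then 1 else 0) then (1 : ℝ) else 0) =
    if A then 1 else 0 := by
  by_cases A <;> norm_num [*]

end Gates

lemma sqrt_two_inv_sq : (√2)⁻¹ ^ 2 = (1 / 2 : ℝ) := by
  rw [inv_pow, Real.sq_sqrt zero_le_two, one_div]

-- `⌈q / 2 ^ t⌉` for `q ≥ 1`
def blockIndex (t q : ℕ) : ℕ := (q - 1) / 2 ^ t + 1

lemma blockIndex_zero {q : ℕ} (hq : 1 ≤ q) : blockIndex 0 q = q := by
  simp only [blockIndex, pow_zero, Nat.div_one]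
  omega

lemma blockIndex_succ (t q : ℕ) : blockIndex (t + 1) q = (blockIndex t q + 1) / 2 := by
  unfold blockIndex
  rw [pow_succ, ← Nat.div_div_eq_div_mul]
  omega

lemma blockIndex_mono (t : ℕ) : Monotone (blockIndex t) := fun _ _ h =>
  Nat.add_le_add_right (Nat.div_le_div_right (Nat.sub_le_sub_right h 1)) 1

lemma blockIndex_clog {k q : ℕ} (hq : q ≤ k) : blockIndex (Nat.clog 2 k) q = 1 := by
  have hk := Nat.le_pow_clog one_lt_two k
  have hpos := Nat.one_le_two_pow (n := Nat.clog 2 k)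
  unfold blockIndex
  rw [Nat.div_eq_of_lt (by omega)]

def block (k t h : ℕ) : Finset ℕ := {q ∈ Icc 1 k | blockIndex t q = h}

lemma block_zero {k h : ℕ} (hh : h ∈ Icc 1 k) : block k 0 h = {h} := by
  ext q
  simp only [block, mem_filter, mem_singleton]
  constructor
  · rintro ⟨hq, hqh⟩
    rwa [blockIndex_zero (mem_Icc.1 hq).1] at hqh
  · rintro rfl
    exact ⟨hh, blockIndex_zero (mem_Icc.1 hh).1⟩

lemma block_succ (k t h : ℕ) : block k (t + 1) h = block k t (2 * h - 1) ∪ block k t (2 * h) := by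
  ext q
  have hpos : 1 ≤ blockIndex t q := Nat.le_add_left 1 _
  simp only [block, mem_filter, mem_union, mem_Icc, blockIndex_succ]
  omega

lemma block_eq_empty {k t h : ℕ} (hh : blockIndex t k < h) : block k t h = ∅ :=
  filter_eq_empty_iff.2 fun _ hq => ((blockIndex_mono t (mem_Icc.1 hq).2).trans_lt hh).ne

lemma block_clog (k : ℕ) : block k (Nat.clog 2 k) 1 = Icc 1 k :=
  filter_true_of_mem fun _ hq => blockIndex_clog (mem_Icc.1 hq).2

section Network

variable (k p : ℕ) (idx : ℕ → ℕ) (a b : ℕ → ℝ)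

def width : ℕ → ℕ
  | 0 => p
  | 1 => 2 * k
  | t + 2 => blockIndex t k

def weight : ℕ → ℕ → ℕ → ℝ
  | 0, _ => 0
  | 1, h => basisVec (idx ((h + 1) / 2)) 1
  | 2, h => pairVec (2 * h - 1) (2 * h) (√2)⁻¹ (-(√2)⁻¹)
  | t + 3, h =>
      if 2 * h ≤ blockIndex t k then pairVec (2 * h - 1) (2 * h) (√2)⁻¹ (√2)⁻¹
      else basisVec (2 * h - 1) 1

def bias : ℕ → ℕ → ℝ
  | 0, _ => 0
  | 1, h => if h % 2 = 1 then a ((h + 1) / 2) else b ((h + 1) / 2)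
  | 2, _ => (√2)⁻¹ / 2
  | t + 3, h => if 2 * h ≤ blockIndex t k then 3 / 2 * (√2)⁻¹ else 1 / 2

/-- Layer `0` outputs the input itself, so that layer `1` obeys the same recursion as the
deeper layers. -/
def output : ℕ → ℕ → (ℕ → ℝ) → ℝ
  | 0, j, x => x j
  | l + 1, h, x =>
      if bias k a b (l + 1) h <
        ∑ j ∈ Icc 1 (width k p l), weight k idx (l + 1) h j * output l j x
      then 1 else 0

lemma output_succ (l h : ℕ) (x : ℕ → ℝ) :
    output k p idx a b (l + 1) h x =
      if bias k a b (l + 1) h <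
        ∑ j ∈ Icc 1 (width k p l), weight k idx (l + 1) h j * output k p idx a b l j x
      then 1 else 0 := by
  rw [output]

variable {k p idx a b}

lemma output_succ_of_weight_eq_basisVec {l h i : ℕ} {c : ℝ}
    (hw : weight k idx (l + 1) h = basisVec i c) (hi : i ∈ Icc 1 (width k p l)) (x : ℕ → ℝ) :
    output k p idx a b (l + 1) h x =
      if bias k a b (l + 1) h < c * output k p idx a b l i x then 1 else 0 := by
  rw [output_succ, hw, sum_basisVec_mul hi]

lemma output_succ_of_weight_eq_pairVec {l h i j : ℕ} {c d : ℝ}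
    (hw : weight k idx (l + 1) h = pairVec i j c d) (hi : i ∈ Icc 1 (width k p l))
    (hj : j ∈ Icc 1 (width k p l)) (x : ℕ → ℝ) :
    output k p idx a b (l + 1) h x =
      if bias k a b (l + 1) h < c * output k p idx a b l i x + d * output k p idx a b l j x
      then 1 else 0 := by
  rw [output_succ, hw, sum_pairVec_mul hi hj]

lemma weight_unitTwoSparseOn (hk : 1 ≤ k) (hidx : ∀ q ∈ Icc 1 k, idx q ∈ Icc 1 p)
    {l h : ℕ} (hl : 1 ≤ l) (hh : h ∈ Icc 1 (width k p l)) :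
    UnitTwoSparseOn (Icc 1 (width k p (l - 1))) (weight k idx l h) := by
  rw [mem_Icc] at hh
  match l, hl with
  | 1, _ =>
    exact unitTwoSparseOn_basisVec (hidx _ (mem_Icc.2 ⟨by omega, by simp [width] at hh; omega⟩))
  | 2, _ =>
    simp only [width, blockIndex_zero hk] at hh
    exact unitTwoSparseOn_pairVec (by simp [width]; omega) (by simp [width]; omega) (by omega)
      (by rw [neg_sq, sqrt_two_inv_sq]; norm_num)
  | t + 3, _ =>
    simp only [width, blockIndex_succ] at hh
    have hleft : 2 * h - 1 ∈ Icc 1 (width k p (t + 2)) :=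
      mem_Icc.2 ⟨by omega, by simp [width]; omega⟩
    rw [weight]
    split_ifs with hpair
    · exact unitTwoSparseOn_pairVec hleft (mem_Icc.2 ⟨by omega, hpair⟩) (by omega)
        (by rw [sqrt_two_inv_sq]; norm_num)
    · exact unitTwoSparseOn_basisVec hleft

lemma output_one (hidx : ∀ q ∈ Icc 1 k, idx q ∈ Icc 1 p) {h : ℕ} (hh : (h + 1) / 2 ∈ Icc 1 k)
    (x : ℕ → ℝ) :
    output k p idx a b 1 h x = if bias k a b 1 h < x (idx ((h + 1) / 2)) then 1 else 0 := by
  rw [output_succ_of_weight_eq_basisVec rfl (hidx _ hh), one_mul]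
  rfl

lemma output_two (hidx : ∀ q ∈ Icc 1 k, idx q ∈ Icc 1 p) {q : ℕ} (hq : q ∈ Icc 1 k)
    (x : ℕ → ℝ) :
    output k p idx a b 2 q x = if a q < x (idx q) ∧ x (idx q) ≤ b q then 1 else 0 := by
  rw [mem_Icc] at hq
  have hodd : (2 * q - 1 + 1) / 2 = q := by omega
  have heven : (2 * q + 1) / 2 = q := by omega
  rw [output_succ_of_weight_eq_pairVec rfl (mem_Icc.2 ⟨by omega, by simp [width]; omega⟩)
      (mem_Icc.2 ⟨by omega, by simp [width]; omega⟩),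
    output_one hidx (by rw [hodd]; exact mem_Icc.2 hq),
    output_one hidx (by rw [heven]; exact mem_Icc.2 hq)]
  simp only [bias, hodd, heven, show (2 * q - 1) % 2 = 1 by omega,
    show ¬(2 * q) % 2 = 1 by omega, if_true, if_false]
  rw [threshold_andNot _ _ (by positivity)]
  simp only [not_lt]

lemma output_eq_ite_forall_block (hk : 1 ≤ k) (hidx : ∀ q ∈ Icc 1 k, idx q ∈ Icc 1 p)
    (t : ℕ) {h : ℕ} (hh : h ∈ Icc 1 (blockIndex t k)) (x : ℕ → ℝ) :
    output k p idx a b (t + 2) h x =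
      if ∀ q ∈ block k t h, a q < x (idx q) ∧ x (idx q) ≤ b q then 1 else 0 := by
  induction t generalizing h with
  | zero =>
    rw [blockIndex_zero hk] at hh
    rw [output_two hidx hh, block_zero hh]
    simp
  | succ t ih =>
    rw [mem_Icc, blockIndex_succ] at hh
    have hleft : 2 * h - 1 ∈ Icc 1 (blockIndex t k) := mem_Icc.2 ⟨by omega, by omega⟩
    by_cases hpair : 2 * h ≤ blockIndex t k
    · have hright : 2 * h ∈ Icc 1 (blockIndex t k) := mem_Icc.2 ⟨by omega, hpair⟩
      rw [output_succ_of_weight_eq_pairVec (by rw [weight, if_pos hpair]) hleft hright,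
        ih hleft, ih hright, bias, if_pos hpair, threshold_and _ _ (by positivity), block_succ]
      exact if_congr forall_mem_union.symm rfl rfl
    · rw [output_succ_of_weight_eq_basisVec (by rw [weight, if_neg hpair]) hleft, ih hleft,
        bias, if_neg hpair, threshold_id, block_succ, block_eq_empty (not_le.1 hpair), union_empty]

end Network

end ZeroOneNeuroBox

end

open scoped Classical

open ZeroOneNeuroBox in
theorem stmt14_general (k p : ℕ) (hk : 1 ≤ k)
    (idx : ℕ → ℕ)
    (hidx_mem : ∀ q ∈ Finset.Icc 1 k, idx q ∈ Finset.Icc 1 p)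
    (a b : ℕ → ℝ) :
    ∃ (L : ℕ) (widths : ℕ → ℕ) (weight : ℕ → ℕ → ℕ → ℝ) (bias : ℕ → ℕ → ℝ)
      (f : ℕ → ℕ → (ℕ → ℝ) → ℝ),
      L = 2 + Nat.clog 2 k ∧
      widths 0 = p ∧ widths L = 1 ∧
      (∀ l ∈ Finset.Icc 1 L, ∀ h ∈ Finset.Icc 1 (widths l),
        (∑ j ∈ Finset.Icc 1 (widths (l - 1)), (weight l h j) ^ 2 = 1) ∧
          ((Finset.Icc 1 (widths (l - 1))).filter fun j => weight l h j ≠ 0).card ≤ 2) ∧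
      (∀ h ∈ Finset.Icc 1 (widths 1), ∀ x : ℕ → ℝ,
        f 1 h x =
          if bias 1 h < ∑ j ∈ Finset.Icc 1 p, weight 1 h j * x j then 1 else 0) ∧
      (∀ l ∈ Finset.Icc 2 L, ∀ h ∈ Finset.Icc 1 (widths l), ∀ x : ℕ → ℝ,
        f l h x =
          if bias l h < ∑ j ∈ Finset.Icc 1 (widths (l - 1)), weight l h j * f (l - 1) j x
          then 1 else 0) ∧
      (∀ x : ℕ → ℝ,
        f L 1 x =
          ∏ q ∈ Finset.Icc 1 k,
            if a q < x (idx q) ∧ x (idx q) ≤ b q then (1 : ℝ) else 0) := by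
  have hroot : blockIndex (Nat.clog 2 k) k = 1 := blockIndex_clog le_rfl
  refine ⟨2 + Nat.clog 2 k, width k p, weight k idx, bias k a b, output k p idx a b, rfl, rfl,
    by rw [add_comm]; exact hroot,
    fun l hl h hh => weight_unitTwoSparseOn hk hidx_mem (mem_Icc.1 hl).1 hh,
    fun h _ x => output_succ k p idx a b 0 h x, fun l hl h _ x => ?_, fun x => ?_⟩
  · obtain ⟨m, rfl⟩ : ∃ m, l = m + 1 := ⟨l - 1, by rw [mem_Icc] at hl; omega⟩
    exact output_succ k p idx a b m h x
  · rw [add_comm, output_eq_ite_forall_block hk hidx_mem _ (by rw [hroot]; simp), block_clog,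
      prod_boole]

/-- For k, p ≥ 1, indices i₁ < ⋯ < i_k in {1,…,p} and reals a_q < b_q,
there exists a 01Neuro network of depth L = 2 + ⌈log₂ k⌉ on ℝ^p with sparsity w₀ = 2
(for suitable widths, with p₀ = p and p_L = 1) whose output is
f_{L,1}(x) = ∏_{q=1}^{k} 1{a_q < x_{i_q} ≤ b_q} for every x ∈ ℝ^p.

Encoding: coordinates, layers and neurons are indexed by naturals in the ranges
`Finset.Icc 1 ·`; `weight l h j` is the j-th entry of the weight vector of neuron (l,h)
(fed by layer l−1), `bias l h` its bias, and `f l h` its 0/1 output function; unit norm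
and 2-sparsity are required of every weight vector, and the neuron outputs satisfy the
01Neuro forward recursion with indicator activations. -/
theorem stmt14 (k p : ℕ) (hk : 1 ≤ k) (hp : 1 ≤ p)
    (idx : ℕ → ℕ) (hidx_mono : StrictMonoOn idx (Finset.Icc 1 k : Set ℕ))
    (hidx_mem : ∀ q ∈ Finset.Icc 1 k, idx q ∈ Finset.Icc 1 p)
    (a b : ℕ → ℝ) (hab : ∀ q ∈ Finset.Icc 1 k, a q < b q) :
    ∃ (L : ℕ) (widths : ℕ → ℕ) (weight : ℕ → ℕ → ℕ → ℝ) (bias : ℕ → ℕ → ℝ)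
      (f : ℕ → ℕ → (ℕ → ℝ) → ℝ),
      L = 2 + Nat.clog 2 k ∧
      widths 0 = p ∧ widths L = 1 ∧
      (∀ l ∈ Finset.Icc 1 L, ∀ h ∈ Finset.Icc 1 (widths l),
        (∑ j ∈ Finset.Icc 1 (widths (l - 1)), (weight l h j) ^ 2 = 1) ∧
          ((Finset.Icc 1 (widths (l - 1))).filter fun j => weight l h j ≠ 0).card ≤ 2) ∧
      (∀ h ∈ Finset.Icc 1 (widths 1), ∀ x : ℕ → ℝ,
        f 1 h x =
          if bias 1 h < ∑ j ∈ Finset.Icc 1 p, weight 1 h j * x j then 1 else 0) ∧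
      (∀ l ∈ Finset.Icc 2 L, ∀ h ∈ Finset.Icc 1 (widths l), ∀ x : ℕ → ℝ,
        f l h x =
          if bias l h < ∑ j ∈ Finset.Icc 1 (widths (l - 1)), weight l h j * f (l - 1) j x
          then 1 else 0) ∧
      (∀ x : ℕ → ℝ,
        f L 1 x =
          ∏ q ∈ Finset.Icc 1 k,
            if a q < x (idx q) ∧ x (idx q) ≤ b q then (1 : ℝ) else 0) :=
  stmt14_general k p hk idx hidx_mem a b
end
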